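/- arXiv:1307.1156 — 4 statements merged into one kernel-verified Lean document; each statement's English description precedes it below -/
import Mathlib

section
/- Let μ be a C₀-nice measure on ℂ, let δ > 0, and let K_δ(z) = z̄ / max(δ,|z|)². Then for every f ∈ L²(μ) and every z ∈ ℂ, the integral ∫_ℂ K_δ(z−ξ) f(ξ) dμ(ξ) converges absolutely and its absolute value is at most (3C₀/δ)^{1/2} ‖f‖_{L²(μ)}. -/
open MeasureTheory Metric Complex ENNReal Set

/-!
By Cauchy–Schwarz it suffices to bound `∫ |K_δ(z - ξ)|² dμ(ξ)`, and
`|K_δ(z - ξ)| ≤ h(ξ) := 1 / max(δ, |z - ξ|)`. By the layer-cake formula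
`∫ h² dμ = 2 ∫₀^∞ t μ{h > t} dt`; the superlevel set `{h > t}` lies in the disc of radius `1/t`
about `z` and is empty for `t ≥ 1/δ`, so niceness gives
`∫ h² dμ ≤ 2 ∫₀^{1/δ} t · C₀/t dt = 2C₀/δ ≤ 3C₀/δ`.
-/

section Holder

variable {α 𝕜 : Type*} [MeasurableSpace α] {μ : Measure α} [RCLike 𝕜] {p q : ℝ≥0∞}
  [HolderTriple p q 1]

theorem norm_integral_mul_le_eLpNorm_mul_eLpNorm {φ f : α → 𝕜} (hφ : MemLp φ p μ)
    (hf : MemLp f q μ) :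
    ‖∫ x, φ x * f x ∂μ‖ ≤ (eLpNorm φ p μ).toReal * (eLpNorm f q μ).toReal := by
  have key : ‖∫ x, φ x * f x ∂μ‖ₑ ≤ eLpNorm φ p μ * eLpNorm f q μ :=
    calc ‖∫ x, φ x * f x ∂μ‖ₑ ≤ eLpNorm (φ • f) 1 μ := by
          rw [eLpNorm_one_eq_lintegral_enorm]
          exact enorm_integral_le_lintegral_enorm _
      _ ≤ eLpNorm φ p μ * eLpNorm f q μ := eLpNorm_smul_le_mul_eLpNorm hf.1 hφ.1
  rw [← toReal_enorm, ← ENNReal.toReal_mul]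
  exact ENNReal.toReal_mono (mul_ne_top hφ.eLpNorm_ne_top hf.eLpNorm_ne_top) key

end Holder

section InvMaxDist

variable {X : Type*} [PseudoMetricSpace X] {δ t : ℝ} {x : X}

lemma setOf_lt_inv_max_dist_subset_ball (hδ : 0 < δ) (ht : 0 < t) :
    {y | t < (max δ (dist x y))⁻¹} ⊆ ball x t⁻¹ := by
  intro y hy
  have : max δ (dist x y) < t⁻¹ := (lt_inv_comm₀ ht (by positivity)).1 hy
  rw [mem_ball, dist_comm]
  exact (le_max_right _ _).trans_lt this

lemma setOf_lt_inv_max_dist_eq_empty (hδ : 0 < δ) (ht : δ⁻¹ ≤ t) :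
    {y | t < (max δ (dist x y))⁻¹} = ∅ := by
  ext y
  simpa using (inv_anti₀ hδ (le_max_left _ _)).trans ht

variable [MeasurableSpace X] {μ : Measure X} {C : ℝ}

lemma measure_setOf_lt_inv_max_dist_mul_le (hδ : 0 < δ)
    (hμ : ∀ r, 0 < r → μ (ball x r) ≤ ENNReal.ofReal (C * r)) (ht : 0 < t) :
    μ {y | t < (max δ (dist x y))⁻¹} * ENNReal.ofReal t ≤
      (Iio δ⁻¹).indicator (fun _ ↦ ENNReal.ofReal C) t := by
  rcases lt_or_ge t δ⁻¹ with htδ | htδ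
  · rw [indicator_of_mem (mem_Iio.2 htδ)]
    calc μ {y | t < (max δ (dist x y))⁻¹} * ENNReal.ofReal t
        ≤ ENNReal.ofReal (C * t⁻¹) * ENNReal.ofReal t := by
          gcongr
          exact (measure_mono (setOf_lt_inv_max_dist_subset_ball hδ ht)).trans
            (hμ _ (inv_pos.2 ht))
      _ = ENNReal.ofReal C := by
          rw [← ENNReal.ofReal_mul' ht.le, inv_mul_cancel_right₀ ht.ne']
  · simp [setOf_lt_inv_max_dist_eq_empty hδ htδ]

variable [OpensMeasurableSpace X]

lemma lintegral_inv_max_dist_sq_le (hδ : 0 < δ)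
    (hμ : ∀ r, 0 < r → μ (ball x r) ≤ ENNReal.ofReal (C * r)) :
    ∫⁻ y, ENNReal.ofReal ((max δ (dist x y))⁻¹ ^ 2) ∂μ ≤ ENNReal.ofReal (2 * C / δ) := by
  simp_rw [← Real.rpow_two]
  rw [lintegral_rpow_eq_lintegral_meas_lt_mul μ (ae_of_all _ fun y ↦ by positivity)
    (by fun_prop) two_pos]
  calc ENNReal.ofReal 2 * ∫⁻ t in Ioi 0,
        μ {y | t < (max δ (dist x y))⁻¹} * ENNReal.ofReal (t ^ ((2 : ℝ) - 1))
      ≤ ENNReal.ofReal 2 * ∫⁻ t in Ioi 0, (Iio δ⁻¹).indicator (fun _ ↦ ENNReal.ofReal C) t := by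
        gcongr ENNReal.ofReal 2 * ?_
        refine setLIntegral_mono' measurableSet_Ioi fun t (ht : 0 < t) ↦ ?_
        rw [show (2 : ℝ) - 1 = 1 by norm_num, Real.rpow_one]
        exact measure_setOf_lt_inv_max_dist_mul_le hδ hμ ht
    _ = ENNReal.ofReal (2 * C / δ) := by
        rw [lintegral_indicator_const measurableSet_Iio, Measure.restrict_apply measurableSet_Iio,
          Iio_inter_Ioi, Real.volume_Ioo, sub_zero, ← ENNReal.ofReal_mul' (by positivity),
          ← ENNReal.ofReal_mul zero_le_two, div_eq_mul_inv, mul_assoc]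

lemma eLpNorm_inv_max_dist_le (hC : 0 ≤ C) (hδ : 0 < δ)
    (hμ : ∀ r, 0 < r → μ (ball x r) ≤ ENNReal.ofReal (C * r)) :
    eLpNorm (fun y ↦ (max δ (dist x y))⁻¹) 2 μ ≤ ENNReal.ofReal √(2 * C / δ) := by
  have h := eLpNorm_nnreal_pow_eq_lintegral (μ := μ) (f := fun y ↦ (max δ (dist x y))⁻¹)
    (p := 2) two_ne_zero
  simp only [ENNReal.coe_ofNat, NNReal.coe_ofNat, ENNReal.rpow_ofNat] at h
  rw [← ENNReal.pow_le_pow_left_iff two_ne_zero, h, ← ENNReal.ofReal_pow (Real.sqrt_nonneg _),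
    Real.sq_sqrt (by positivity)]
  refine (lintegral_congr fun y ↦ ?_).trans_le (lintegral_inv_max_dist_sq_le hδ hμ)
  rw [Real.enorm_eq_ofReal (by positivity), ENNReal.ofReal_pow (by positivity)]

lemma memLp_inv_max_dist (hC : 0 ≤ C) (hδ : 0 < δ)
    (hμ : ∀ r, 0 < r → μ (ball x r) ≤ ENNReal.ofReal (C * r)) :
    MemLp (fun y ↦ (max δ (dist x y))⁻¹) 2 μ :=
  ⟨by fun_prop, (eLpNorm_inv_max_dist_le hC hδ hμ).trans_lt ofReal_lt_top⟩

end InvMaxDist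

lemma norm_conj_div_max_sq_le {δ : ℝ} (hδ : 0 < δ) (w : ℂ) :
    ‖starRingEnd ℂ w / ((max δ ‖w‖ : ℝ) : ℂ) ^ 2‖ ≤ (max δ ‖w‖)⁻¹ := by
  have hm : 0 < max δ ‖w‖ := hδ.trans_le (le_max_left _ _)
  calc ‖starRingEnd ℂ w / ((max δ ‖w‖ : ℝ) : ℂ) ^ 2‖ = ‖w‖ / max δ ‖w‖ ^ 2 := by
        rw [norm_div, norm_pow, RCLike.norm_conj, norm_real, Real.norm_of_nonneg hm.le]
    _ ≤ max δ ‖w‖ / max δ ‖w‖ ^ 2 := by gcongr; exact le_max_right _ _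
    _ = (max δ ‖w‖)⁻¹ := by field_simp

theorem regularized_cauchy_bounded (μ : Measure ℂ) (C₀ δ : ℝ) (hC₀ : 0 < C₀) (hδ : 0 < δ)
    (hnice : ∀ (z : ℂ) (r : ℝ), 0 < r → μ (ball z r) ≤ ENNReal.ofReal (C₀ * r))
    (Kδ : ℂ → ℂ) (hK : ∀ z : ℂ, Kδ z = (starRingEnd ℂ) z / (max δ ‖z‖ : ℝ) ^ 2)
    (f : ℂ → ℂ) (hf : MemLp f 2 μ) (z : ℂ) :
    Integrable (fun ξ => Kδ (z - ξ) * f ξ) μ ∧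
      ‖∫ ξ, Kδ (z - ξ) * f ξ ∂μ‖ ≤
        Real.sqrt (3 * C₀ / δ) * (eLpNorm f 2 μ).toReal := by
  have hKδ : Measurable Kδ := by rw [funext hK]; fun_prop
  have hK_le : ∀ ξ, ‖Kδ (z - ξ)‖ ≤ ‖(max δ (dist z ξ))⁻¹‖ := fun ξ ↦ by
    rw [hK, dist_eq_norm, Real.norm_of_nonneg (by positivity)]
    exact norm_conj_div_max_sq_le hδ _
  have hKz : MemLp (fun ξ ↦ Kδ (z - ξ)) 2 μ :=
    (memLp_inv_max_dist hC₀.le hδ (hnice z)).of_le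
      (hKδ.comp (measurable_const.sub measurable_id)).aestronglyMeasurable (ae_of_all _ hK_le)
  refine ⟨hKz.integrable_mul hf, ?_⟩
  calc ‖∫ ξ, Kδ (z - ξ) * f ξ ∂μ‖
      ≤ (eLpNorm (fun ξ ↦ Kδ (z - ξ)) 2 μ).toReal * (eLpNorm f 2 μ).toReal :=
        norm_integral_mul_le_eLpNorm_mul_eLpNorm hKz hf
    _ ≤ √(2 * C₀ / δ) * (eLpNorm f 2 μ).toReal := by
        gcongr
        refine ENNReal.toReal_le_of_le_ofReal (Real.sqrt_nonneg _) ?_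
        exact (eLpNorm_mono hK_le).trans (eLpNorm_inv_max_dist_le hC₀.le hδ (hnice z))
    _ ≤ √(3 * C₀ / δ) * (eLpNorm f 2 μ).toReal := by gcongr; linarith
end

section
/- Let ℓ be a dyadic fraction and Q a dyadic square with ℓ(Q) = 2ℓ. For any two points z₁, z₂ ∈ 4Q with |z₁ − z₂| < ℓ, there is a dyadic square Q' of side length ℓ such that 7Q' ⊂ 7Q and z₁, z₂ ∈ 3Q'. -/
/-!
Both conditions split into one condition on the real parts and one on the imaginary parts, so it
suffices to treat intervals. With `t = 2^j`, `4Q = [(2k-3)t, (2k+5)t]`, `3Q' = [(k'-1)t, (k'+2)t]`,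
and `7Q' ⊆ 7Q` means `2k-3 ≤ k' ≤ 2k+4`. If `x₁ ≤ x₂ < x₁ + t`, then `k' = min ⌊x₁/t⌋ (2k+4)`
works: the floor puts `x₁` in `[k't, (k'+1)t)` and `x₂` below `(k'+2)t`, and when the cap is
active, `x₂ ≤ (2k+5)t` anyway.
-/

open Complex

/-- The concentric dilate `λQ` of the dyadic square
`Q = [k 2^j, (k+1) 2^j) × [l 2^j, (l+1) 2^j)` by a factor `lam`. -/
def dyadicDilate (j k l : ℤ) (lam : ℝ) : Set ℂ :=
  {z : ℂ | |z.re - (k + 1 / 2) * (2 : ℝ) ^ j| ≤ lam * (2 : ℝ) ^ j / 2 ∧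
           |z.im - (l + 1 / 2) * (2 : ℝ) ^ j| ≤ lam * (2 : ℝ) ^ j / 2}

open Set

/-- The side `[k 2^j, (k+1) 2^j)` of a dyadic square, dilated by `lam` about its center. -/
def dyadicIntervalDilate (j k : ℤ) (lam : ℝ) : Set ℝ :=
  {x : ℝ | |x - (k + 1 / 2) * (2 : ℝ) ^ j| ≤ lam * (2 : ℝ) ^ j / 2}

theorem dyadicIntervalDilate_eq_Icc (j k : ℤ) (lam : ℝ) :
    dyadicIntervalDilate j k lam =
      Icc ((k + 1 / 2 - lam / 2) * (2 : ℝ) ^ j) ((k + 1 / 2 + lam / 2) * (2 : ℝ) ^ j) := by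
  ext x
  simp only [dyadicIntervalDilate, mem_ofPred_eq, abs_le, mem_Icc]
  constructor <;> rintro ⟨h₁, h₂⟩ <;> constructor <;> linarith

theorem exists_int_mem_Icc_of_abs_sub_lt {t : ℝ} (ht : 0 < t) {a b : ℤ} (hab : a ≤ b)
    {x₁ x₂ : ℝ} (h₁ : x₁ ∈ Icc (a * t) ((b + 1) * t)) (h₂ : x₂ ∈ Icc (a * t) ((b + 1) * t))
    (hd : |x₁ - x₂| < t) :
    ∃ n : ℤ, n ∈ Icc a b ∧ x₁ ∈ Icc ((n - 1) * t) ((n + 2) * t) ∧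
      x₂ ∈ Icc ((n - 1) * t) ((n + 2) * t) := by
  wlog hle : x₁ ≤ x₂ generalizing x₁ x₂
  · obtain ⟨n, hn, hn₂, hn₁⟩ := this h₂ h₁ (by rwa [abs_sub_comm]) (le_of_not_ge hle)
    exact ⟨n, hn, hn₁, hn₂⟩
  have hx₂ : x₂ < x₁ + t := by linarith [(abs_lt.mp hd).1]
  set m := ⌊x₁ / t⌋
  have hm_le : (m : ℝ) * t ≤ x₁ := (le_div_iff₀ ht).mp (Int.floor_le _)
  have hm_lt : x₁ < (m + 1) * t := (div_lt_iff₀ ht).mp (Int.lt_floor_add_one _)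
  have ham : a ≤ m := Int.le_floor.mpr ((le_div_iff₀ ht).mpr h₁.1)
  refine ⟨min m b, ⟨le_min ham hab, min_le_right _ _⟩, ?_⟩
  have hlow : ((min m b : ℤ) - 1 : ℝ) * t ≤ x₁ := by
    have : ((min m b : ℤ) : ℝ) ≤ m := by exact_mod_cast min_le_left m b
    nlinarith
  have hup : x₂ ≤ ((min m b : ℤ) + 2 : ℝ) * t := by
    rcases min_choice m b with h | h <;> rw [h] <;> linarith [h₂.2]
  exact ⟨⟨hlow, by linarith⟩, ⟨by linarith, hup⟩⟩

theorem exists_dyadicIntervalDilate_three_of_abs_sub_lt {j k : ℤ} {x₁ x₂ : ℝ}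
    (h₁ : x₁ ∈ dyadicIntervalDilate (j + 1) k 4) (h₂ : x₂ ∈ dyadicIntervalDilate (j + 1) k 4)
    (hd : |x₁ - x₂| < (2 : ℝ) ^ j) :
    ∃ k' : ℤ, dyadicIntervalDilate j k' 7 ⊆ dyadicIntervalDilate (j + 1) k 7 ∧
      x₁ ∈ dyadicIntervalDilate j k' 3 ∧ x₂ ∈ dyadicIntervalDilate j k' 3 := by
  have ht : (0 : ℝ) < 2 ^ j := by positivity
  have hpow : (2 : ℝ) ^ (j + 1) = 2 ^ j * 2 := zpow_add_one₀ two_ne_zero j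
  simp only [dyadicIntervalDilate_eq_Icc, hpow] at h₁ h₂ ⊢
  have hbounds : ∀ x ∈ Icc ((k + 1 / 2 - 4 / 2 : ℝ) * (2 ^ j * 2))
      ((k + 1 / 2 + 4 / 2) * (2 ^ j * 2)), x ∈ Icc (((2 * k - 3 : ℤ) : ℝ) * 2 ^ j) (((2 * k + 4 : ℤ) + 1 : ℝ) * 2 ^ j) := by
    rintro x ⟨hl, hu⟩
    push_cast
    constructor <;> linarith
  obtain ⟨n, ⟨hkn, hnk⟩, hn₁, hn₂⟩ :=
    exists_int_mem_Icc_of_abs_sub_lt ht (by omega) (hbounds x₁ h₁) (hbounds x₂ h₂) hd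
  have hkn' : (2 * k - 3 : ℝ) ≤ n := by exact_mod_cast hkn
  have hnk' : (n : ℝ) ≤ 2 * k + 4 := by exact_mod_cast hnk
  refine ⟨n, Icc_subset_Icc ?_ ?_, ?_, ?_⟩
  · nlinarith
  · nlinarith
  · convert hn₁ using 2 <;> ring
  · convert hn₂ using 2 <;> ring

theorem dyadic_square_fact (j k l : ℤ) (z₁ z₂ : ℂ)
    (h₁ : z₁ ∈ dyadicDilate (j + 1) k l 4) (h₂ : z₂ ∈ dyadicDilate (j + 1) k l 4)
    (hdist : dist z₁ z₂ < (2 : ℝ) ^ j) :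
    ∃ k' l' : ℤ, dyadicDilate j k' l' 7 ⊆ dyadicDilate (j + 1) k l 7 ∧
      z₁ ∈ dyadicDilate j k' l' 3 ∧ z₂ ∈ dyadicDilate j k' l' 3 := by
  rw [Complex.dist_eq] at hdist
  obtain ⟨k', hk'_sub, hk'₁, hk'₂⟩ := exists_dyadicIntervalDilate_three_of_abs_sub_lt h₁.1 h₂.1
    ((Complex.abs_re_le_norm (z₁ - z₂)).trans_lt hdist)
  obtain ⟨l', hl'_sub, hl'₁, hl'₂⟩ := exists_dyadicIntervalDilate_three_of_abs_sub_lt h₁.2 h₂.2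
    ((Complex.abs_im_le_norm (z₁ - z₂)).trans_lt hdist)
  exact ⟨k', l', fun z hz ↦ ⟨hk'_sub hz.1, hl'_sub hz.2⟩, ⟨hk'₁, hl'₁⟩, ⟨hk'₂, hl'₂⟩⟩
end

section
/- Let σ be a C₀-nice measure on ℂ with 0 ∉ supp(σ), and let z ∉ supp(σ). Set d₀ = dist({0,z}, supp(σ)) > 0. Then ∫_ℂ |1/(z−ξ) + 1/ξ| dσ(ξ) ≤ C(C₀)|z|/d₀ for an absolute constant C(C₀) depending only on C₀. -/
/-!
Since `1/(z - ξ) + 1/ξ = z / ((z - ξ) ξ)`, AM-GM bounds the integrand by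
`|z|/2 · (1/|ξ|² + 1/|z - ξ|²)`. For each centre `w ∈ {0, z}` the measure gives no mass to
`B(w, d₀)`, and on the dyadic annulus `d₀ 2ᵏ ≤ |ξ - w| < d₀ 2ᵏ⁺¹` the kernel `1/|ξ - w|²` is at
most `(d₀ 2ᵏ)⁻²` while the annulus has mass at most `C₀ d₀ 2ᵏ⁺¹`. Summing the geometric series
gives `∫ 1/|ξ - w|² dσ ≤ 4 C₀ / d₀`, hence the theorem with `C = 4 C₀`.
-/

open MeasureTheory Metric

/-- The support of a measure. -/
def msupp (σ : Measure ℂ) : Set ℂ := {z : ℂ | ∀ r : ℝ, 0 < r → 0 < σ (ball z r)}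

lemma measure_compl_msupp (σ : Measure ℂ) : σ (msupp σ)ᶜ = 0 := by
  refine measure_null_of_locally_null _ fun x hx ↦ ?_
  simp only [msupp, Set.mem_compl_iff, Set.mem_ofPred_eq, not_forall, not_lt,
    nonpos_iff_eq_zero] at hx
  obtain ⟨r, hr, hnull⟩ := hx
  exact ⟨ball x r, Filter.mem_inf_of_left (ball_mem_nhds x hr), hnull⟩

lemma ae_mem_msupp (σ : Measure ℂ) : ∀ᵐ ξ ∂σ, ξ ∈ msupp σ :=
  measure_compl_msupp σ

lemma measure_ball_eq_zero_of_le_dist_msupp {σ : Measure ℂ} {w : ℂ} {r : ℝ}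
    (h : ∀ ξ ∈ msupp σ, r ≤ dist w ξ) : σ (ball w r) = 0 :=
  measure_mono_null (fun ξ hξ hmem ↦ (h ξ hmem).not_gt (by rwa [dist_comm, ← mem_ball]))
    (measure_compl_msupp σ)

section DyadicAnnulus

variable {X : Type*} [PseudoMetricSpace X]

def dyadicAnnulus (w : X) (d : ℝ) (k : ℕ) : Set X :=
  ball w (d * 2 ^ (k + 1)) \ ball w (d * 2 ^ k)

lemma compl_ball_subset_iUnion_dyadicAnnulus {w : X} {d : ℝ} (hd : 0 < d) :
    (ball w d)ᶜ ⊆ ⋃ k, dyadicAnnulus w d k := by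
  intro x hx
  by_contra hnot
  simp only [dyadicAnnulus, Set.mem_iUnion, Set.mem_sdiff, mem_ball, not_exists, not_and,
    not_lt] at hnot
  have hfar : ∀ k : ℕ, d * 2 ^ k ≤ dist x w := by
    intro k
    induction k with
    | zero => simpa using hx
    | succ k ih => exact not_lt.mp fun h ↦ hnot k h ih
  obtain ⟨k, hk⟩ := pow_unbounded_of_one_lt (dist x w / d) (one_lt_two (α := ℝ))
  rw [div_lt_iff₀ hd] at hk
  linarith [hfar k]

variable [MeasurableSpace X] {μ : Measure X} {C₀ : ℝ}

lemma setLIntegral_dyadicAnnulus_inv_dist_sq_le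
    (hμ : ∀ (w : X) (r : ℝ), 0 < r → μ (ball w r) ≤ ENNReal.ofReal (C₀ * r))
    (w : X) {d : ℝ} (hd : 0 < d) (k : ℕ) :
    ∫⁻ ξ in dyadicAnnulus w d k, ENNReal.ofReal ((dist ξ w ^ 2)⁻¹) ∂μ ≤
      ENNReal.ofReal (2 * C₀ / d * (1 / 2) ^ k) := by
  have hinner : 0 < d * 2 ^ k := by positivity
  calc ∫⁻ ξ in dyadicAnnulus w d k, ENNReal.ofReal ((dist ξ w ^ 2)⁻¹) ∂μ
      ≤ ∫⁻ _ in dyadicAnnulus w d k, ENNReal.ofReal (((d * 2 ^ k) ^ 2)⁻¹) ∂μ := by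
        refine setLIntegral_mono measurable_const fun x hx ↦ ENNReal.ofReal_le_ofReal ?_
        have hx' : d * 2 ^ k ≤ dist x w := not_lt.mp hx.2
        gcongr
    _ = ENNReal.ofReal (((d * 2 ^ k) ^ 2)⁻¹) * μ (dyadicAnnulus w d k) := setLIntegral_const _ _
    _ ≤ ENNReal.ofReal (((d * 2 ^ k) ^ 2)⁻¹) * ENNReal.ofReal (C₀ * (d * 2 ^ (k + 1))) := by
        gcongr
        exact (measure_mono Set.sdiff_subset).trans (hμ w _ (by positivity))
    _ = ENNReal.ofReal (2 * C₀ / d * (1 / 2) ^ k) := by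
        rw [← ENNReal.ofReal_mul (by positivity)]
        congr 1
        rw [one_div_pow]
        field_simp
        ring

lemma lintegral_inv_dist_sq_le
    (hμ : ∀ (w : X) (r : ℝ), 0 < r → μ (ball w r) ≤ ENNReal.ofReal (C₀ * r))
    (w : X) {d : ℝ} (hd : 0 < d) (hnull : μ (ball w d) = 0) :
    ∫⁻ ξ, ENNReal.ofReal ((dist ξ w ^ 2)⁻¹) ∂μ ≤ ENNReal.ofReal (4 * C₀ / d) := by
  have hfar : ∀ᵐ ξ ∂μ, ξ ∈ (ball w d)ᶜ := compl_mem_ae_iff.mpr hnull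
  have hhalf : ENNReal.ofReal (1 / 2) = 2⁻¹ := by
    rw [one_div, ENNReal.ofReal_inv_of_pos two_pos, ENNReal.ofReal_ofNat]
  calc ∫⁻ ξ, ENNReal.ofReal ((dist ξ w ^ 2)⁻¹) ∂μ
      = ∫⁻ ξ in (ball w d)ᶜ, ENNReal.ofReal ((dist ξ w ^ 2)⁻¹) ∂μ := by
        rw [Measure.restrict_eq_self_of_ae_mem hfar]
    _ ≤ ∫⁻ ξ in ⋃ k, dyadicAnnulus w d k, ENNReal.ofReal ((dist ξ w ^ 2)⁻¹) ∂μ :=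
        lintegral_mono_set (compl_ball_subset_iUnion_dyadicAnnulus hd)
    _ ≤ ∑' k, ∫⁻ ξ in dyadicAnnulus w d k, ENNReal.ofReal ((dist ξ w ^ 2)⁻¹) ∂μ :=
        lintegral_iUnion_le _ _
    _ ≤ ∑' k : ℕ, ENNReal.ofReal (2 * C₀ / d * (1 / 2) ^ k) :=
        ENNReal.tsum_le_tsum (setLIntegral_dyadicAnnulus_inv_dist_sq_le hμ w hd)
    _ = ENNReal.ofReal (2 * C₀ / d) * ∑' k : ℕ, ENNReal.ofReal (1 / 2) ^ k := by
        simp only [ENNReal.ofReal_mul' (pow_nonneg (one_div_nonneg.mpr zero_le_two) _),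
          ENNReal.ofReal_pow (one_div_nonneg.mpr zero_le_two), ENNReal.tsum_mul_left]
    _ = ENNReal.ofReal (4 * C₀ / d) := by
        rw [ENNReal.tsum_geometric, hhalf, ENNReal.one_sub_inv_two, inv_inv,
          ← ENNReal.ofReal_ofNat, ← ENNReal.ofReal_mul' zero_le_two]
        ring_nf

end DyadicAnnulus

lemma norm_inv_sub_add_inv_le {z ξ : ℂ} (hξ : ξ ≠ 0) (hzξ : z - ξ ≠ 0) :
    ‖(z - ξ)⁻¹ + ξ⁻¹‖ ≤ ‖z‖ / 2 * ((‖ξ‖ ^ 2)⁻¹ + (‖z - ξ‖ ^ 2)⁻¹) := by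
  have hsum : (z - ξ)⁻¹ + ξ⁻¹ = z * ((z - ξ)⁻¹ * ξ⁻¹) := by
    field_simp
    ring
  have hAMGM := two_mul_le_add_sq ‖z - ξ‖⁻¹ ‖ξ‖⁻¹
  rw [hsum, norm_mul, norm_mul, norm_inv, norm_inv, ← inv_pow, ← inv_pow]
  nlinarith [norm_nonneg z]

theorem away_from_support_L1 (C₀ : ℝ) (hC₀ : 0 < C₀) :
    ∃ C : ℝ, 0 < C ∧
      ∀ (σ : Measure ℂ),
        (∀ (w : ℂ) (r : ℝ), 0 < r → σ (ball w r) ≤ ENNReal.ofReal (C₀ * r)) →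
        (0 : ℂ) ∉ msupp σ →
        ∀ z : ℂ, z ∉ msupp σ →
        ∀ d₀ : ℝ, 0 < d₀ →
          (∀ ξ ∈ msupp σ, d₀ ≤ dist 0 ξ ∧ d₀ ≤ dist z ξ) →
          ∫⁻ ξ, ENNReal.ofReal ‖(z - ξ)⁻¹ + ξ⁻¹‖ ∂σ ≤
            ENNReal.ofReal (C * ‖z‖ / d₀) := by
  refine ⟨4 * C₀, by positivity, fun σ hσ _ z _ d₀ hd hdist ↦ ?_⟩
  let kernel (w ξ : ℂ) : ENNReal := ENNReal.ofReal ((dist ξ w ^ 2)⁻¹)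
  have hkernel (w : ℂ) (hw : ∀ ξ ∈ msupp σ, d₀ ≤ dist w ξ) :
      ∫⁻ ξ, kernel w ξ ∂σ ≤ ENNReal.ofReal (4 * C₀ / d₀) :=
    lintegral_inv_dist_sq_le hσ w hd (measure_ball_eq_zero_of_le_dist_msupp hw)
  have hpointwise : ∀ᵐ ξ ∂σ, ENNReal.ofReal ‖(z - ξ)⁻¹ + ξ⁻¹‖ ≤
      ENNReal.ofReal (‖z‖ / 2) * (kernel 0 ξ + kernel z ξ) := by
    filter_upwards [ae_mem_msupp σ] with ξ hξ
    obtain ⟨h0, hz⟩ := hdist ξ hξ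
    rw [dist_zero_left] at h0
    rw [dist_eq_norm] at hz
    simp only [kernel, dist_zero_right]
    rw [dist_eq_norm_sub', ← ENNReal.ofReal_add (by positivity) (by positivity),
      ← ENNReal.ofReal_mul (by positivity)]
    exact ENNReal.ofReal_le_ofReal <| norm_inv_sub_add_inv_le
      (norm_pos_iff.mp (hd.trans_le h0)) (norm_pos_iff.mp (hd.trans_le hz))
  calc ∫⁻ ξ, ENNReal.ofReal ‖(z - ξ)⁻¹ + ξ⁻¹‖ ∂σ
      ≤ ∫⁻ ξ, ENNReal.ofReal (‖z‖ / 2) * (kernel 0 ξ + kernel z ξ) ∂σ :=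
        lintegral_mono_ae hpointwise
    _ = ENNReal.ofReal (‖z‖ / 2) * (∫⁻ ξ, kernel 0 ξ ∂σ + ∫⁻ ξ, kernel z ξ ∂σ) := by
        rw [lintegral_const_mul' _ _ ENNReal.ofReal_ne_top, lintegral_add_left (by fun_prop)]
    _ ≤ ENNReal.ofReal (‖z‖ / 2) *
          (ENNReal.ofReal (4 * C₀ / d₀) + ENNReal.ofReal (4 * C₀ / d₀)) := by
        gcongr
        exacts [hkernel 0 fun ξ hξ ↦ (hdist ξ hξ).1, hkernel z fun ξ hξ ↦ (hdist ξ hξ).2]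
    _ = ENNReal.ofReal (4 * C₀ * ‖z‖ / d₀) := by
        rw [← ENNReal.ofReal_add (by positivity) (by positivity),
          ← ENNReal.ofReal_mul (by positivity)]
        ring_nf
end

section
/- Let E ⊂ ℂ be a set with the following two properties: (i) for each ω ∉ E there is a closed half-plane with ω on its boundary that is disjoint from E; (ii) E does not contain the interior of any nondegenerate triangle with vertices in E (e.g., because the complement of E meets the interior of every such triangle). Then any three points of E are collinear; that is, E is contained in a line. -/
open Complex

theorem support_in_line (E : Set ℂ)
    (hhalf : ∀ ω : ℂ, ω ∉ E → ∃ e : ℂ, ‖e‖ = 1 ∧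
      ∀ ζ ∈ E, ¬ (0 ≤ ((ζ - ω) * (starRingEnd ℂ) e).re))
    (htri : ∀ z ξ ζ : ℂ, z ∈ E → ξ ∈ E → ζ ∈ E →
      ¬ Collinear ℝ ({z, ξ, ζ} : Set ℂ) →
      ∃ ω ∈ interior (convexHull ℝ ({z, ξ, ζ} : Set ℂ)), ω ∉ E) :
    ∀ z ξ ζ : ℂ, z ∈ E → ξ ∈ E → ζ ∈ E → Collinear ℝ ({z, ξ, ζ} : Set ℂ) := by
  intro z ξ ζ hz hξ hζ
  by_contra hcol
  obtain ⟨ω, hωint, hωE⟩ := htri z ξ ζ hz hξ hζ hcol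
  obtain ⟨e, -, hneg⟩ := hhalf ω hωE
  have hωhull : ω ∈ convexHull ℝ ({z, ξ, ζ} : Set ℂ) := interior_subset hωint
  have hlin : IsLinearMap ℝ (fun w : ℂ => (w * (starRingEnd ℂ) e).re) := by
    constructor
    · intro a b; simp [add_mul]
    · intro c a; simp [Complex.smul_re, smul_mul_assoc]; ring
  have hconv : Convex ℝ {w : ℂ | (w * (starRingEnd ℂ) e).re < (ω * (starRingEnd ℂ) e).re} :=
    convex_halfSpace_lt hlin _
  have hsub : ({z, ξ, ζ} : Set ℂ) ⊆
      {w : ℂ | (w * (starRingEnd ℂ) e).re < (ω * (starRingEnd ℂ) e).re} := by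
    intro w hw
    have hwE : w ∈ E := by
      rcases hw with rfl | rfl | rfl <;> assumption
    have := hneg w hwE
    have h' : ((w - ω) * (starRingEnd ℂ) e).re < 0 := lt_of_not_ge this
    simpa [sub_mul, sub_lt_iff_lt_add] using h'
  have := hconv.convexHull_subset_iff.mpr hsub hωhull
  simp at this
end
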